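/- arXiv:1308.4572 — 5 statements merged into one kernel-verified Lean document; each statement's English description precedes it below -/
import Mathlib

section
/- Let a, b ≥ 0 and let R₀* = {y : a·∑_{m=1}^M W(y|x_m) + max_m W(y|x_m) ≤ b·Q₀(y)}, with R_m* = (R₀*)^c ∩ {y : W(y|x_m) > max_{k≠m} W(y|x_k)} (ties broken arbitrarily). If another partition (R₀, R₁, …, R_M) of 𝒴ⁿ satisfies Q₀(R₀^c) ≤ Q₀((R₀*)^c) and (1/M)∑_m W(R₀|x_m) ≤ (1/M)∑_m W(R₀*|x_m), then (1/M)∑_m W((R_m*)^c|x_m) ≤ (1/M)∑_m W(R_m^c|x_m). -/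
/-!
Write `V y = max_m W(y|x_m)`. For any partition, the correct-decision mass `∑_m W(R_m|x_m)` is
at most `∑_{y ∉ R₀} V y`, with equality for ML decoding regions, so it suffices to show that
`R₀*` carries the least `V`-mass among admissible rejection regions. That is a Neyman–Pearson
argument: `R₀*` is exactly the set where `V - (b·Q₀ - a·∑_m W(·|x_m))` is nonpositive, so it
minimises the sum of this function over all subsets, and the false-alarm and missed-detection
constraints control the contribution of `b·Q₀ - a·∑_m W(·|x_m)`.
-/

open Finset

section Partition

variable {ι Y : Type*} [Fintype ι] {P : Option ι → Finset Y}

theorem pairwiseDisjoint_some (hP : ∀ y, ∃! i, y ∈ P i) :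
    ((univ : Finset ι) : Set ι).PairwiseDisjoint fun m => P (some m) := by
  intro m _ k _ hmk
  refine disjoint_left.mpr fun y hm hk => hmk ?_
  obtain ⟨i, -, huniq⟩ := hP y
  exact Option.some_injective _ ((huniq _ hm).trans (huniq _ hk).symm)

variable [Fintype Y] [DecidableEq Y]

theorem sum_sum_compl_eq_sub {β : Type*} [AddCommGroup β] {W : ι → Y → β} (s : ι → Finset Y) :
    ∑ m, ∑ y ∈ (s m)ᶜ, W m y = ∑ m, ∑ y, W m y - ∑ m, ∑ y ∈ s m, W m y := by
  rw [← sum_sub_distrib]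
  exact sum_congr rfl fun m _ => eq_sub_of_add_eq (sum_compl_add_sum _ _)

theorem sum_compl_le_sum_compl_iff {β : Type*} [AddCommGroup β] [PartialOrder β]
    [IsOrderedAddMonoid β] (s t : Finset Y) (f : Y → β) :
    ∑ y ∈ sᶜ, f y ≤ ∑ y ∈ tᶜ, f y ↔ ∑ y ∈ t, f y ≤ ∑ y ∈ s, f y := by
  rw [eq_sub_of_add_eq (sum_compl_add_sum s f), eq_sub_of_add_eq (sum_compl_add_sum t f),
    sub_le_sub_iff_left]

theorem compl_none_eq_biUnion_some (hP : ∀ y, ∃! i, y ∈ P i) :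
    (P none)ᶜ = univ.biUnion fun m => P (some m) := by
  ext y
  obtain ⟨i, hi, huniq⟩ := hP y
  simp only [mem_compl, mem_biUnion, mem_univ, true_and]
  constructor
  · intro hy
    cases i with
    | none => exact absurd hi hy
    | some m => exact ⟨m, hi⟩
  · rintro ⟨m, hm⟩ hy
    exact Option.some_ne_none m ((huniq _ hm).trans (huniq _ hy).symm)

theorem sum_compl_none_eq_sum_sum_some {β : Type*} [AddCommMonoid β]
    (hP : ∀ y, ∃! i, y ∈ P i) (g : Y → β) :
    ∑ y ∈ (P none)ᶜ, g y = ∑ m, ∑ y ∈ P (some m), g y := by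
  rw [compl_none_eq_biUnion_some hP, sum_biUnion (pairwiseDisjoint_some hP)]

theorem sum_sum_some_le_sum_compl_none {β : Type*} [AddCommMonoid β] [PartialOrder β]
    [IsOrderedAddMonoid β] (hP : ∀ y, ∃! i, y ∈ P i) {W : ι → Y → β} {V : Y → β} (hWV : ∀ m y, W m y ≤ V y) :
    ∑ m, ∑ y ∈ P (some m), W m y ≤ ∑ y ∈ (P none)ᶜ, V y := by
  rw [sum_compl_none_eq_sum_sum_some hP]
  exact sum_le_sum fun m _ => sum_le_sum fun y _ => hWV m y

theorem sum_compl_none_eq_sum_sum_some_of_eq {β : Type*} [AddCommMonoid β]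
    (hP : ∀ y, ∃! i, y ∈ P i) {W : ι → Y → β} {V : Y → β} (hWV : ∀ m, ∀ y ∈ P (some m), W m y = V y) :
    ∑ y ∈ (P none)ᶜ, V y = ∑ m, ∑ y ∈ P (some m), W m y := by
  rw [sum_compl_none_eq_sum_sum_some hP]
  exact sum_congr rfl fun m _ => sum_congr rfl fun y hy => (hWV m y hy).symm

end Partition

section NeymanPearson

variable {Y : Type*} [Fintype Y] [DecidableEq Y]

theorem sum_le_sum_of_mem_iff_nonpos {β : Type*} [AddCommMonoid β] [LinearOrder β]
    [IsOrderedAddMonoid β] {A B : Finset Y} {h : Y → β}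
    (hA : ∀ y, y ∈ A ↔ h y ≤ 0) : ∑ y ∈ A, h y ≤ ∑ y ∈ B, h y := by
  rw [← univ_inter A, ← univ_inter B, ← sum_ite_mem, ← sum_ite_mem]
  refine sum_le_sum fun y _ => ?_
  by_cases hyA : y ∈ A <;> by_cases hyB : y ∈ B <;>
    simp only [hyA, hyB, if_true, if_false, le_refl]
  · exact (hA y).mp hyA
  · exact (not_le.mp (mt (hA y).mpr hyA)).le

theorem sum_le_sum_of_neymanPearson {A B : Finset Y} {V Q S : Y → ℝ} {a b : ℝ}
    (ha : 0 ≤ a) (hb : 0 ≤ b) (hA : ∀ y, y ∈ A ↔ a * S y + V y ≤ b * Q y)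
    (hQ : ∑ y ∈ A, Q y ≤ ∑ y ∈ B, Q y) (hS : ∑ y ∈ B, S y ≤ ∑ y ∈ A, S y) :
    ∑ y ∈ A, V y ≤ ∑ y ∈ B, V y := by
  have hmin := sum_le_sum_of_mem_iff_nonpos (B := B) (h := fun y => a * S y + V y - b * Q y)
    fun y => (hA y).trans sub_nonpos.symm
  simp only [sum_sub_distrib, sum_add_distrib, ← mul_sum] at hmin
  linarith [mul_le_mul_of_nonneg_left hQ hb, mul_le_mul_of_nonneg_left hS ha]

end NeymanPearson

theorem stmt0_general {Y : Type*} [Fintype Y] [DecidableEq Y]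
    (M : ℕ) [NeZero M]
    (W : Fin M → Y → ℝ) (Q0 : Y → ℝ)
    (a b : ℝ) (ha : 0 ≤ a) (hb : 0 ≤ b)
    (Rstar R : Option (Fin M) → Finset Y)
    (hRstarPart : ∀ y : Y, ∃! i, y ∈ Rstar i)
    (hRPart : ∀ y : Y, ∃! i, y ∈ R i)
    (hRstar0 : ∀ y : Y, y ∈ Rstar none ↔
      a * ∑ m, W m y + Finset.univ.sup' Finset.univ_nonempty (fun m => W m y) ≤ b * Q0 y)
    (hRstarML : ∀ (m : Fin M) (y : Y), y ∈ Rstar (some m) → ∀ k, W k y ≤ W m y)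
    (hFA : ∑ y ∈ (R none)ᶜ, Q0 y ≤ ∑ y ∈ (Rstar none)ᶜ, Q0 y)
    (hMD : (1 / M : ℝ) * ∑ m, ∑ y ∈ R none, W m y ≤
           (1 / M : ℝ) * ∑ m, ∑ y ∈ Rstar none, W m y) :
    (1 / M : ℝ) * ∑ m, ∑ y ∈ (Rstar (some m))ᶜ, W m y ≤
      (1 / M : ℝ) * ∑ m, ∑ y ∈ (R (some m))ᶜ, W m y := by
  set V : Y → ℝ := fun y => univ.sup' univ_nonempty fun m => W m y
  have hWV : ∀ m y, W m y ≤ V y := fun m y => le_sup' (fun m => W m y) (mem_univ m)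
  have hMLV : ∀ m, ∀ y ∈ Rstar (some m), W m y = V y := fun m y hy =>
    le_antisymm (hWV m y) (sup'_le _ _ fun k _ => hRstarML m y hy k)
  have hM : (0 : ℝ) < 1 / M := by
    have := NeZero.pos M
    positivity
  have hQ : ∑ y ∈ Rstar none, Q0 y ≤ ∑ y ∈ R none, Q0 y :=
    (sum_compl_le_sum_compl_iff _ _ _).mp hFA
  have hS : ∑ y ∈ R none, ∑ m, W m y ≤ ∑ y ∈ Rstar none, ∑ m, W m y := by
    rw [sum_comm, sum_comm (s := Rstar none)]
    exact le_of_mul_le_mul_left hMD hM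
  have hcorrect : ∑ m, ∑ y ∈ R (some m), W m y ≤ ∑ m, ∑ y ∈ Rstar (some m), W m y :=
    calc _ ≤ ∑ y ∈ (R none)ᶜ, V y := sum_sum_some_le_sum_compl_none hRPart hWV
      _ ≤ ∑ y ∈ (Rstar none)ᶜ, V y := (sum_compl_le_sum_compl_iff _ _ _).mpr
          (sum_le_sum_of_neymanPearson ha hb hRstar0 hQ hS)
      _ = _ := sum_compl_none_eq_sum_sum_some_of_eq hRstarPart hMLV
  refine mul_le_mul_of_nonneg_left ?_ hM.le
  rw [sum_sum_compl_eq_sub, sum_sum_compl_eq_sub]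
  linarith

/-- Optimality (Neyman–Pearson style) of the detector/decoder
`R₀* = {y : a·∑_m W(y|x_m) + max_m W(y|x_m) ≤ b·Q₀(y)}` with ML decoding regions
(ties broken arbitrarily).  If another partition `(R₀,…,R_M)` has FA probability and
MD probability no larger than those of the starred partition, then the starred
partition has no larger decoding-error probability. -/
theorem stmt0 {Y : Type*} [Fintype Y] [DecidableEq Y]
    (M : ℕ) [NeZero M]
    (W : Fin M → Y → ℝ) (Q0 : Y → ℝ)
    (hW : ∀ m y, 0 ≤ W m y) (hWsum : ∀ m, ∑ y, W m y = 1)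
    (hQ0 : ∀ y, 0 ≤ Q0 y) (hQ0sum : ∑ y, Q0 y = 1)
    (a b : ℝ) (ha : 0 ≤ a) (hb : 0 ≤ b)
    (Rstar R : Option (Fin M) → Finset Y)
    (hRstarPart : ∀ y : Y, ∃! i, y ∈ Rstar i)
    (hRPart : ∀ y : Y, ∃! i, y ∈ R i)
    (hRstar0 : ∀ y : Y, y ∈ Rstar none ↔
      a * ∑ m, W m y + Finset.univ.sup' Finset.univ_nonempty (fun m => W m y) ≤ b * Q0 y)
    (hRstarML : ∀ (m : Fin M) (y : Y), y ∈ Rstar (some m) → ∀ k, W k y ≤ W m y)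
    (hFA : ∑ y ∈ (R none)ᶜ, Q0 y ≤ ∑ y ∈ (Rstar none)ᶜ, Q0 y)
    (hMD : (1 / M : ℝ) * ∑ m, ∑ y ∈ R none, W m y ≤
           (1 / M : ℝ) * ∑ m, ∑ y ∈ Rstar none, W m y) :
    (1 / M : ℝ) * ∑ m, ∑ y ∈ (Rstar (some m))ᶜ, W m y ≤
      (1 / M : ℝ) * ∑ m, ∑ y ∈ (R (some m))ᶜ, W m y :=
  stmt0_general M W Q0 a b ha hb Rstar R hRstarPart hRPart hRstar0 hRstarML hFA hMD
end

section
/- If A₁,…,A_M are pairwise independent events in a probability space, then Pr(⋃_{i=1}^M A_i) ≥ (1/2)·min{1, ∑_{i=1}^M Pr(A_i)}. -/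
/-!
Second moment method. Let `N = ∑ᵢ 1_{Aᵢ}` and `S = ∑ᵢ Pr(Aᵢ) = E[N]`. Since `N` vanishes off
`U = ⋃ᵢ Aᵢ`, Cauchy–Schwarz gives `S² ≤ Pr(U)·E[N²]`, and pairwise independence bounds
`E[N²] = ∑ᵢⱼ Pr(Aᵢ ∩ Aⱼ) ≤ S + S²`. Hence `Pr(U) ≥ S / (1 + S) ≥ min{1, S} / 2`.
-/

open MeasureTheory ENNReal

theorem min_one_div_two_le_of_sq_le_mul {S u : ℝ≥0∞} (hS : S ≠ ∞) (h : S ^ 2 ≤ u * (S + S ^ 2)) :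
    min 1 S / 2 ≤ u := by
  rcases eq_or_ne S 0 with rfl | hS0
  · simp
  have hD0 : S + S ^ 2 ≠ 0 := by simp [hS0]
  have hDtop : S + S ^ 2 ≠ ∞ := by simp [hS]
  have hmin : min 1 S * (S + S ^ 2) ≤ 2 * S ^ 2 := by
    rcases le_total S 1 with hle | hle
    · rw [min_eq_right hle, two_mul, mul_add, ← sq]
      gcongr
      calc S * S ^ 2 ≤ 1 * S ^ 2 := by gcongr
        _ = S ^ 2 := one_mul _
    · rw [min_eq_left hle, one_mul, two_mul]
      gcongr
      calc S = S * 1 := (mul_one S).symm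
        _ ≤ S ^ 2 := by rw [sq]; gcongr
  rw [ENNReal.div_le_iff two_ne_zero ofNat_ne_top, mul_comm u,
    ← ENNReal.mul_le_mul_iff_left hD0 hDtop, mul_assoc]
  exact hmin.trans (by gcongr)

theorem sq_lintegral_le_measure_univ_mul {Ω : Type*} [MeasurableSpace Ω] (μ : Measure Ω)
    {f : Ω → ℝ≥0∞} (hf : AEMeasurable f μ) :
    (∫⁻ ω, f ω ∂μ) ^ 2 ≤ μ Set.univ * ∫⁻ ω, f ω ^ 2 ∂μ := by
  have holder := ENNReal.lintegral_mul_le_Lp_mul_Lq μ Real.HolderConjugate.two_two hf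
    (aemeasurable_const (b := (1 : ℝ≥0∞)))
  simp only [Pi.mul_apply, mul_one, one_rpow, lintegral_const, one_mul] at holder
  calc (∫⁻ ω, f ω ∂μ) ^ 2
      ≤ ((∫⁻ ω, f ω ^ (2 : ℝ) ∂μ) ^ (2⁻¹ : ℝ) * μ Set.univ ^ (2⁻¹ : ℝ)) ^ 2 := by
        simpa only [one_div] using pow_le_pow_left₀ zero_le holder 2
    _ = μ Set.univ * ∫⁻ ω, f ω ^ 2 ∂μ := by
        rw [mul_pow, mul_comm]
        simp only [← Nat.cast_ofNat (R := ℝ), rpow_inv_natCast_pow two_ne_zero, rpow_natCast]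

section IndicatorSums

variable {Ω ι : Type*} [Fintype ι]

theorem sum_indicator_one_sq {R : Type*} [CommSemiring R] (A : ι → Set Ω) (ω : Ω) :
    (∑ i, (A i).indicator (1 : Ω → R) ω) ^ 2 = ∑ i, ∑ j, (A i ∩ A j).indicator 1 ω := by
  simp only [sq, Finset.sum_mul_sum, Set.inter_indicator_one, Pi.mul_apply]

theorem support_sum_indicator_one_subset_iUnion {M : Type*} [AddCommMonoid M] [One M]
    (A : ι → Set Ω) : (fun ω => ∑ i, (A i).indicator (1 : Ω → M) ω).support ⊆ ⋃ i, A i := by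
  intro ω hω
  obtain ⟨i, -, hi⟩ := Finset.exists_ne_zero_of_sum_ne_zero hω
  exact Set.mem_iUnion.2 ⟨i, Set.mem_of_indicator_ne_zero hi⟩

variable [MeasurableSpace Ω]

theorem lintegral_sum_indicator_one (μ : Measure Ω) {A : ι → Set Ω}
    (hA : ∀ i, MeasurableSet (A i)) :
    ∫⁻ ω, ∑ i, (A i).indicator 1 ω ∂μ = ∑ i, μ (A i) := by
  rw [lintegral_finsetSum _ fun i _ => measurable_one.indicator (hA i)]
  simp only [lintegral_indicator_one (hA _)]

/-- The Chung–Erdős inequality. -/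
theorem sq_sum_measure_le_measure_iUnion_mul (μ : Measure Ω) {A : ι → Set Ω}
    (hA : ∀ i, MeasurableSet (A i)) :
    (∑ i, μ (A i)) ^ 2 ≤ μ (⋃ i, A i) * ∑ i, ∑ j, μ (A i ∩ A j) := by
  set N : Ω → ℝ≥0∞ := fun ω => ∑ i, (A i).indicator 1 ω
  have hN : Measurable N := Finset.measurable_sum _ fun i _ => measurable_one.indicator (hA i)
  calc (∑ i, μ (A i)) ^ 2 = (∫⁻ ω, N ω ∂μ.restrict (⋃ i, A i)) ^ 2 := by
        rw [setLIntegral_eq_of_support_subset (support_sum_indicator_one_subset_iUnion A),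
          lintegral_sum_indicator_one μ hA]
    _ ≤ μ.restrict (⋃ i, A i) Set.univ * ∫⁻ ω, N ω ^ 2 ∂μ.restrict (⋃ i, A i) :=
        sq_lintegral_le_measure_univ_mul _ hN.aemeasurable
    _ ≤ μ (⋃ i, A i) * ∫⁻ ω, N ω ^ 2 ∂μ := by
        rw [Measure.restrict_apply_univ]
        gcongr
        exact Measure.restrict_le_self
    _ = μ (⋃ i, A i) * ∑ i, ∑ j, μ (A i ∩ A j) := by
        simp only [N, sum_indicator_one_sq, ← Fintype.sum_prod_type']
        rw [lintegral_sum_indicator_one μ fun p : ι × ι => (hA p.1).inter (hA p.2)]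

end IndicatorSums

theorem sum_sum_measure_inter_le_of_pairwise {Ω ι : Type*} [MeasurableSpace Ω] [Fintype ι]
    (μ : Measure Ω) {A : ι → Set Ω}
    (hind : Pairwise fun i j => μ (A i ∩ A j) = μ (A i) * μ (A j)) :
    ∑ i, ∑ j, μ (A i ∩ A j) ≤ ∑ i, μ (A i) + (∑ i, μ (A i)) ^ 2 := by
  classical
  have hrow : ∀ i, ∑ j, μ (A i ∩ A j) ≤ μ (A i) + μ (A i) * ∑ j, μ (A j) := by
    intro i
    rw [← Finset.add_sum_erase _ _ (Finset.mem_univ i), Set.inter_self, Finset.mul_sum]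
    gcongr
    calc ∑ j ∈ Finset.univ.erase i, μ (A i ∩ A j)
        = ∑ j ∈ Finset.univ.erase i, μ (A i) * μ (A j) :=
          Finset.sum_congr rfl fun j hj => hind (Finset.ne_of_mem_erase hj).symm
      _ ≤ ∑ j, μ (A i) * μ (A j) := Finset.sum_le_sum_of_subset (Finset.subset_univ _)
  calc ∑ i, ∑ j, μ (A i ∩ A j) ≤ ∑ i, (μ (A i) + μ (A i) * ∑ j, μ (A j)) :=
        Finset.sum_le_sum fun i _ => hrow i
    _ = ∑ i, μ (A i) + (∑ i, μ (A i)) ^ 2 := by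
        rw [Finset.sum_add_distrib, ← Finset.sum_mul, sq]

/-- If `A₁,…,A_M` are pairwise independent events in a probability space,
then `Pr(⋃ᵢ Aᵢ) ≥ (1/2)·min{1, ∑ᵢ Pr(Aᵢ)}`. -/
theorem stmt3 {Ω : Type*} [MeasurableSpace Ω] (μ : Measure Ω) [IsProbabilityMeasure μ]
    (M : ℕ) (A : Fin M → Set Ω) (hA : ∀ i, MeasurableSet (A i))
    (hind : ∀ i j, i ≠ j → μ (A i ∩ A j) = μ (A i) * μ (A j)) :
    min 1 (∑ i, μ (A i)) / 2 ≤ μ (⋃ i, A i) := by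
  refine min_one_div_two_le_of_sq_le_mul (ENNReal.sum_ne_top.2 fun i _ => measure_ne_top μ _) ?_
  calc (∑ i, μ (A i)) ^ 2 ≤ μ (⋃ i, A i) * ∑ i, ∑ j, μ (A i ∩ A j) :=
        sq_sum_measure_le_measure_iUnion_mul μ hA
    _ ≤ μ (⋃ i, A i) * (∑ i, μ (A i) + (∑ i, μ (A i)) ^ 2) := by
        gcongr
        exact sum_sum_measure_inter_le_of_pairwise μ hind
end

section
/- Let N be a binomial random variable with parameters M = ⌈e^{nR}⌉ and success probability p_n with (1/n) log p_n → −I as n → ∞, where I > 0, R > 0. For a threshold u ≤ 0 (so the event is {N ≥ 1}): Pr{N ≥ 1} has exponential rate [I − R]_+, i.e., −(1/n) log Pr{N ≥ 1} → max{I − R, 0}. -/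
/-!
Comparing `(1 - p)^M` with `1 - M p` (Bernoulli) and with `exp (-M p)` gives
`e⁻¹ · min (M p) 1 ≤ 1 - (1 - p)^M ≤ min (M p) 1`, so `-log Pr{N ≥ 1}` equals
`[-log (M p)]₊` up to an additive error in `[0, 1]`, which vanishes after division by `n`.
Finally `-(log M + log p) / n → -R + I`, because `e^{nR} ≤ M ≤ e^{nR + 1}`.
-/

open Filter Topology Real

lemma exp_neg_one_mul_min_le_one_sub_exp_neg {x : ℝ} (hx : 0 ≤ x) :
    exp (-1) * min x 1 ≤ 1 - exp (-x) := by
  rcases le_total x 1 with h | h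
  · -- `1 - e^{-x} = e^{-x} (e^x - 1) ≥ e^{-1} x`
    have hmul : exp (-x) * exp x = 1 := by rw [← exp_add]; simp
    have h1 : exp (-1) ≤ exp (-x) := exp_le_exp.mpr (by linarith)
    rw [min_eq_left h]
    nlinarith [add_one_le_exp x, exp_pos (-x)]
  · -- `e ≥ 2` gives `1 - e^{-1} ≥ e^{-1}`
    have hmul : exp (-1) * exp 1 = 1 := by rw [← exp_add]; simp
    have h1 : exp (-x) ≤ exp (-1) := exp_le_exp.mpr (by linarith)
    rw [min_eq_right h]
    nlinarith [add_one_le_exp (1 : ℝ), exp_pos (-1)]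

section OneSubOneSubPow

variable {p : ℝ} (m : ℕ)

lemma one_sub_one_sub_pow_le_min (hp1 : p ≤ 1) :
    1 - (1 - p) ^ m ≤ min (m * p) 1 := by
  refine le_min ?_ ?_
  · nlinarith [one_add_mul_sub_le_pow (by linarith : (-1 : ℝ) ≤ 1 - p) m]
  · linarith [pow_nonneg (by linarith : (0 : ℝ) ≤ 1 - p) m]

lemma exp_neg_one_mul_min_le_one_sub_one_sub_pow (hp0 : 0 ≤ p) (hp1 : p ≤ 1) :
    exp (-1) * min (m * p) 1 ≤ 1 - (1 - p) ^ m := by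
  have hpow : (1 - p) ^ m ≤ exp (-(m * p)) :=
    calc (1 - p) ^ m ≤ exp (-p) ^ m := pow_le_pow_left₀ (by linarith) (one_sub_le_exp_neg p) m
      _ = exp (-(m * p)) := by rw [← exp_nat_mul]; ring_nf
  linarith [exp_neg_one_mul_min_le_one_sub_exp_neg (by positivity : 0 ≤ (m : ℝ) * p)]

lemma neg_log_min_one {x : ℝ} (hx : 0 < x) : -log (min x 1) = max (-log x) 0 := by
  rcases le_total x 1 with h | h
  · rw [min_eq_left h, max_eq_left (neg_nonneg.mpr (log_nonpos hx.le h))]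
  · rw [min_eq_right h, max_eq_right (neg_nonpos.mpr (log_nonneg h)), log_one, neg_zero]

lemma neg_log_one_sub_one_sub_pow_mem_Icc (hp0 : 0 < p) (hp1 : p ≤ 1) (hm : 0 < m) :
    -log (1 - (1 - p) ^ m) ∈ Set.Icc (max (-log (m * p)) 0) (max (-log (m * p)) 0 + 1) := by
  have hmin : 0 < min ((m : ℝ) * p) 1 := lt_min (by positivity) one_pos
  have hlow := exp_neg_one_mul_min_le_one_sub_one_sub_pow m hp0.le hp1
  have hlog_low : log (exp (-1) * min ((m : ℝ) * p) 1) = -1 + log (min ((m : ℝ) * p) 1) := by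
    rw [log_mul (exp_pos _).ne' hmin.ne', log_exp]
  rw [← neg_log_min_one (by positivity)]
  constructor
  · exact neg_le_neg (log_le_log ((mul_pos (exp_pos _) hmin).trans_le hlow) (one_sub_one_sub_pow_le_min m hp1))
  · linarith [log_le_log (mul_pos (exp_pos _) hmin) hlow]

end OneSubOneSubPow

lemma tendsto_div_natCast_of_le_of_le_add {f g : ℕ → ℝ} {ℓ : ℝ} (C : ℝ)
    (hf : Tendsto (fun n => f n / n) atTop (𝓝 ℓ))
    (hfg : ∀ n, f n ≤ g n) (hgf : ∀ n, g n ≤ f n + C) :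
    Tendsto (fun n => g n / n) atTop (𝓝 ℓ) := by
  have hupper : Tendsto (fun n : ℕ => f n / n + C / n) atTop (𝓝 ℓ) := by
    simpa using hf.add (tendsto_const_div_atTop_nhds_zero_nat C)
  refine tendsto_of_tendsto_of_tendsto_of_le_of_le hf hupper (fun n => ?_) (fun n => ?_)
  · exact div_le_div_of_nonneg_right (hfg n) n.cast_nonneg
  · simpa only [add_div] using div_le_div_of_nonneg_right (hgf n) n.cast_nonneg

lemma tendsto_log_ceil_exp_mul_div {R : ℝ} (hR : 0 ≤ R) :
    Tendsto (fun n : ℕ => log ⌈exp (n * R)⌉₊ / n) atTop (𝓝 R) := by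
  have hmul : Tendsto (fun n : ℕ => (n * R) / n) atTop (𝓝 R) :=
    tendsto_const_nhds.congr' <| by
      filter_upwards [eventually_ne_atTop 0] with n hn
      field_simp
  refine tendsto_div_natCast_of_le_of_le_add 1 hmul (fun n => ?_) (fun n => ?_)
  · simpa using log_le_log (exp_pos _) (Nat.le_ceil (exp (n * R)))
  · have hceil : (⌈exp (n * R)⌉₊ : ℝ) < exp (n * R) + 1 := Nat.ceil_lt_add_one (exp_pos _).le
    have hexp : exp (n * R) + 1 ≤ exp (n * R + 1) := by
      rw [exp_add]
      nlinarith [one_le_exp (by positivity : (0 : ℝ) ≤ n * R), add_one_le_exp (1 : ℝ)]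
    simpa using log_le_log (by positivity) (hceil.le.trans hexp)

theorem stmt6_general (R I : ℝ) (hR : 0 < R)
    (p : ℕ → ℝ) (hp : ∀ n, 0 < p n) (hp1 : ∀ n, p n ≤ 1)
    (hplog : Tendsto (fun n : ℕ => Real.log (p n) / n) atTop (nhds (-I)))
    (M : ℕ → ℕ) (hM : ∀ n, M n = ⌈Real.exp (n * R)⌉₊) :
    Tendsto (fun n : ℕ => -(Real.log (1 - (1 - p n) ^ (M n))) / n)
      atTop (nhds (max (I - R) 0)) := by
  have hMpos : ∀ n, 0 < M n := fun n => by
    rw [hM]; exact Nat.one_le_ceil_iff.mpr (exp_pos _)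
  have hlogM : Tendsto (fun n => log (M n) / n) atTop (𝓝 R) := by
    simpa only [hM] using tendsto_log_ceil_exp_mul_div hR.le
  have hlogMp : Tendsto (fun n => -log (M n * p n) / n) atTop (𝓝 (I - R)) := by
    rw [← neg_neg I]
    refine (hplog.neg.sub hlogM).congr fun n => ?_
    rw [log_mul (Nat.cast_pos.mpr (hMpos n)).ne' (hp n).ne']
    ring
  have hrate : Tendsto (fun n => max (-log (M n * p n)) 0 / n) atTop (𝓝 (max (I - R) 0)) :=
    (hlogMp.max tendsto_const_nhds).congr fun n => by
      rw [← max_div_div_right n.cast_nonneg, zero_div]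
  exact tendsto_div_natCast_of_le_of_le_add 1 hrate
    (fun n => (neg_log_one_sub_one_sub_pow_mem_Icc (M n) (hp n) (hp1 n) (hMpos n)).1)
    (fun n => (neg_log_one_sub_one_sub_pow_mem_Icc (M n) (hp n) (hp1 n) (hMpos n)).2)

/-- Let `N ~ Binomial(M, p_n)` with `M = ⌈e^{nR}⌉` and
`(1/n) log p_n → −I`, `I > 0`, `R > 0`.  Then `Pr{N ≥ 1} = 1 − (1 − p_n)^M`
has exponential rate `[I − R]₊`, i.e. `−(1/n) log Pr{N ≥ 1} → max{I − R, 0}`. -/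
theorem stmt6 (R I : ℝ) (hR : 0 < R) (hI : 0 < I)
    (p : ℕ → ℝ) (hp : ∀ n, 0 < p n) (hp1 : ∀ n, p n ≤ 1)
    (hplog : Tendsto (fun n : ℕ => Real.log (p n) / n) atTop (nhds (-I)))
    (M : ℕ → ℕ) (hM : ∀ n, M n = ⌈Real.exp (n * R)⌉₊) :
    Tendsto (fun n : ℕ => -(Real.log (1 - (1 - p n) ^ (M n))) / n)
      atTop (nhds (max (I - R) 0)) :=
  stmt6_general R I hR p hp hp1 hplog M hM
end

section
/- With d(x,y) = log(Q₀(y)/W(y|x)) and D(Q) = E_Q[d(X,Y)], the rate function evaluated at the channel satisfies R̄(D(P×W); (P×W)_Y) = I(P×W). That is, the minimum of I(Q) over joint distributions Q with X-marginal P, Y-marginal equal to (P×W)_Y, and D(Q) ≤ D(P×W), equals the mutual information I(P×W). -/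
/-!
`I(Q) = H(Q_Y) - H(Y|X)` and, by Gibbs' inequality, the conditional entropy is at most the
conditional cross entropy `-E_Q[log W]`, with equality at `Q = P×W`. Since
`D(Q) = E_{Q_Y}[log Q₀] - E_Q[log W]`, this gives `I(Q) + D(Q) ≥ H(Q_Y) + E_{Q_Y}[log Q₀]`, a
quantity depending only on the Y-marginal, with equality at `P×W`. Hence every admissible `Q`
(same Y-marginal, `D(Q) ≤ D(P×W)`) has `I(Q) ≥ I(P×W)`, and `P×W` itself is admissible.
-/

open scoped BigOperators

variable {X Y : Type*} [Fintype X] [Fintype Y]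

/-- X-marginal of a joint distribution on `X × Y`. -/
noncomputable def margX (Q : X × Y → ℝ) (x : X) : ℝ := ∑ y, Q (x, y)

/-- Y-marginal of a joint distribution on `X × Y`. -/
noncomputable def margY (Q : X × Y → ℝ) (y : Y) : ℝ := ∑ x, Q (x, y)

/-- Mutual information `I(Q)` of a joint distribution `Q` on `X × Y`. -/
noncomputable def mutInfo (Q : X × Y → ℝ) : ℝ :=
  ∑ x, ∑ y, Q (x, y) * Real.log (Q (x, y) / (margX Q x * margY Q y))

/-- Expected "distortion" `D(Q) = E_Q[d(X,Y)]`. -/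
noncomputable def Dav (d : X → Y → ℝ) (Q : X × Y → ℝ) : ℝ :=
  ∑ x, ∑ y, Q (x, y) * d x y

/-- `Q` is a joint distribution with X-marginal `P` and Y-marginal `QY`. -/
def IsJoint (P : X → ℝ) (QY : Y → ℝ) (Q : X × Y → ℝ) : Prop :=
  (∀ p, 0 ≤ Q p) ∧ (∀ x, margX Q x = P x) ∧ (∀ y, margY Q y = QY y)

/-- The rate function `R̄(Δ; Q_Y) = inf{I(Q) : X-marginal P, Y-marginal Q_Y, E_Q d ≤ Δ}`. -/
noncomputable def Rbar (P : X → ℝ) (QY : Y → ℝ) (d : X → Y → ℝ) (Δ : ℝ) : ℝ :=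
  sInf (mutInfo '' {Q : X × Y → ℝ | IsJoint P QY Q ∧ Dav d Q ≤ Δ})

open Finset Real

lemma mul_log_div_le_sub {q r : ℝ} (hq : 0 < q) (hr : 0 < r) : q * log (r / q) ≤ r - q :=
  calc q * log (r / q) ≤ q * (r / q - 1) :=
        mul_le_mul_of_nonneg_left (log_le_sub_one_of_pos (div_pos hr hq)) hq.le
    _ = r - q := by field_simp

omit [Fintype X] in
lemma le_margX {Q : X × Y → ℝ} (hQ : ∀ p, 0 ≤ Q p) (x : X) (y : Y) : Q (x, y) ≤ margX Q x :=
  single_le_sum (fun y _ => hQ (x, y)) (mem_univ y)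

omit [Fintype Y] in
lemma le_margY {Q : X × Y → ℝ} (hQ : ∀ p, 0 ≤ Q p) (x : X) (y : Y) : Q (x, y) ≤ margY Q y :=
  single_le_sum (f := fun x => Q (x, y)) (fun x _ => hQ (x, y)) (mem_univ x)

lemma sum_sum_mul_eq_sum_margY_mul (Q : X × Y → ℝ) (f : Y → ℝ) :
    ∑ x, ∑ y, Q (x, y) * f y = ∑ y, margY Q y * f y := by
  rw [sum_comm]
  simp only [margY, sum_mul]

omit [Fintype X] in
lemma margX_eq_of_eq_mul {P : X → ℝ} {W : X → Y → ℝ} {R : X × Y → ℝ}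
    (hWsum : ∀ x, ∑ y, W x y = 1) (hR : ∀ p, R p = P p.1 * W p.1 p.2) (x : X) :
    margX R x = P x := by
  simp only [margX, hR, ← mul_sum, hWsum, mul_one]

lemma Dav_eq_of_eq_log_div {d : X → Y → ℝ} {Q0 : Y → ℝ} {W : X → Y → ℝ}
    (hd : ∀ x y, d x y = log (Q0 y / W x y)) (hQ0 : ∀ y, 0 < Q0 y) (hW : ∀ x y, 0 < W x y)
    (Q : X × Y → ℝ) :
    Dav d Q = ∑ y, margY Q y * log (Q0 y) - ∑ x, ∑ y, Q (x, y) * log (W x y) := by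
  simp only [Dav, hd, log_div (hQ0 _).ne' (hW _ _).ne', mul_sub, sum_sub_distrib,
    sum_sum_mul_eq_sum_margY_mul]

lemma sum_sum_mul_log_sub_le_mutInfo {Q : X × Y → ℝ} {W : X → Y → ℝ} (hQ : ∀ p, 0 ≤ Q p)
    (hW : ∀ x y, 0 < W x y) (hWsum : ∀ x, ∑ y, W x y = 1) :
    ∑ x, ∑ y, Q (x, y) * log (W x y) - ∑ y, margY Q y * log (margY Q y) ≤ mutInfo Q := by
  have pointwise : ∀ x y, Q (x, y) * log (W x y) - Q (x, y) * log (margY Q y)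
      - Q (x, y) * log (Q (x, y) / (margX Q x * margY Q y)) ≤ margX Q x * W x y - Q (x, y) := by
    intro x y
    rcases (hQ (x, y)).eq_or_lt with h0 | hq
    · rw [← h0]
      simpa using mul_nonneg ((hQ (x, y)).trans (le_margX hQ x y)) (hW x y).le
    · have hX := hq.trans_le (le_margX hQ x y)
      have hY := hq.trans_le (le_margY hQ x y)
      have hlog : log (W x y) - log (margY Q y) - log (Q (x, y) / (margX Q x * margY Q y))
          = log (margX Q x * W x y / Q (x, y)) := by
        rw [log_div hq.ne' (mul_pos hX hY).ne', log_div (mul_pos hX (hW x y)).ne' hq.ne',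
          log_mul hX.ne' hY.ne', log_mul hX.ne' (hW x y).ne']
        ring
      rw [← mul_sub, ← mul_sub, hlog]
      exact mul_log_div_le_sub hq (mul_pos hX (hW x y))
  have hmass : ∑ x, ∑ y, (margX Q x * W x y - Q (x, y)) = 0 := by
    simp only [sum_sub_distrib, ← mul_sum, hWsum, mul_one]
    exact sub_eq_zero.mpr (sum_congr rfl fun x _ => rfl)
  have := sum_le_sum fun x (_ : x ∈ univ) => sum_le_sum fun y (_ : y ∈ univ) => pointwise x y
  simp only [sum_sub_distrib, sum_sum_mul_eq_sum_margY_mul] at this hmass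
  unfold mutInfo
  linarith

lemma mutInfo_eq_sum_sum_mul_log_sub {P : X → ℝ} {W : X → Y → ℝ} {R : X × Y → ℝ}
    (hP : ∀ x, 0 ≤ P x) (hW : ∀ x y, 0 < W x y) (hWsum : ∀ x, ∑ y, W x y = 1)
    (hR : ∀ p, R p = P p.1 * W p.1 p.2) :
    mutInfo R = ∑ x, ∑ y, R (x, y) * log (W x y) - ∑ y, margY R y * log (margY R y) := by
  have hRnn : ∀ p, 0 ≤ R p := fun p => hR p ▸ mul_nonneg (hP _) (hW _ _).le
  rw [← sum_sum_mul_eq_sum_margY_mul, ← sum_sub_distrib]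
  refine sum_congr rfl fun x _ => ?_
  rw [← sum_sub_distrib]
  refine sum_congr rfl fun y _ => ?_
  rcases (hP x).eq_or_lt with h0 | hPx
  · simp [hR, ← h0]
  · have hY := (hR (x, y) ▸ mul_pos hPx (hW x y)).trans_le (le_margY hRnn x y)
    rw [← mul_sub, margX_eq_of_eq_mul hWsum hR, hR, mul_div_mul_left _ _ hPx.ne', log_div (hW x y).ne' hY.ne']

theorem stmt9_general (P : X → ℝ) (hP : (∀ x, 0 ≤ P x) ∧ ∑ x, P x = 1)
    (W : X → Y → ℝ) (hW : ∀ x y, 0 < W x y) (hWsum : ∀ x, ∑ y, W x y = 1)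
    (Q0 : Y → ℝ) (hQ0 : ∀ y, 0 < Q0 y)
    (d : X → Y → ℝ) (hd : ∀ x y, d x y = Real.log (Q0 y / W x y))
    (PW : X × Y → ℝ) (hPW : ∀ p, PW p = P p.1 * W p.1 p.2) :
    Rbar P (margY PW) d (Dav d PW) = mutInfo PW := by
  have hPWnn : ∀ p, 0 ≤ PW p := fun p => hPW p ▸ mul_nonneg (hP.1 _) (hW _ _).le
  have hDav := Dav_eq_of_eq_log_div hd hQ0 hW
  have lower : ∀ Q, IsJoint P (margY PW) Q → Dav d Q ≤ Dav d PW → mutInfo PW ≤ mutInfo Q := by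
    rintro Q ⟨hQnn, -, hQY⟩ hD
    have hQ := sum_sum_mul_log_sub_le_mutInfo hQnn hW hWsum
    rw [funext hQY] at hQ
    rw [hDav, hDav, funext hQY] at hD
    linarith [mutInfo_eq_sum_sum_mul_log_sub hP.1 hW hWsum hPW]
  refine IsLeast.csInf_eq ⟨⟨PW, ⟨⟨hPWnn, margX_eq_of_eq_mul hWsum hPW, fun _ => rfl⟩, le_rfl⟩, rfl⟩, ?_⟩
  rintro _ ⟨Q, ⟨hQ, hD⟩, rfl⟩
  exact lower Q hQ hD

/-- with `d(x,y) = log(Q₀(y)/W(y|x))` and `D(Q) = E_Q[d]`, the rate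
function evaluated at the channel satisfies `R̄(D(P×W); (P×W)_Y) = I(P×W)`. -/
theorem stmt9 (P : X → ℝ) (hP : (∀ x, 0 ≤ P x) ∧ ∑ x, P x = 1)
    (W : X → Y → ℝ) (hW : ∀ x y, 0 < W x y) (hWsum : ∀ x, ∑ y, W x y = 1)
    (Q0 : Y → ℝ) (hQ0 : ∀ y, 0 < Q0 y) (hQ0sum : ∑ y, Q0 y = 1)
    (d : X → Y → ℝ) (hd : ∀ x y, d x y = Real.log (Q0 y / W x y))
    (PW : X × Y → ℝ) (hPW : ∀ p, PW p = P p.1 * W p.1 p.2) :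
    Rbar P (margY PW) d (Dav d PW) = mutInfo PW :=
  stmt9_general P hP W hW hWsum Q0 hQ0 d hd PW hPW
end

section
/- Let Q* minimize I(Q) + D(Q) over joint distributions Q with X-marginal P and Y-marginal Q_Y, and write R₁(Q_Y) = I(Q*), D₁(Q_Y) = D(Q*). Then for R ≥ R₁(Q_Y), μ(Q_Y, R) = R₁(Q_Y) + D₁(Q_Y), while for R < R₁(Q_Y), μ(Q_Y, R) = R + D̄(R; Q_Y), where μ(Q_Y,R) = min{I(Q)+D(Q) : I(Q) ≤ R} and D̄(R;Q_Y) = min{D(Q) : I(Q) ≤ R} (all minima over Q with the given marginals). -/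
open scoped BigOperators

variable {X Y : Type*} [Fintype X] [Fintype Y]

/-!
For `R ≥ I(Q*)` the global minimiser `Q*` is feasible, so it attains `μ`. For `R < I(Q*)`,
`I(Q) + D(Q) ≤ R + D(Q)` on the feasible set gives `μ ≤ R + D̄`. Conversely, take a feasible `Q`
and move along the segment from `Q` to `Q*`. All points of the segment have marginals `P`, `Q_Y`,
where `I` is the relative entropy to `P ⊗ Q_Y`: a continuous function, convex because `u log (u / c)`
is. So `I` takes the value `R` at some `Q'` of the segment, and since `I + D` is convex and
`(I + D)(Q*) ≤ (I + D)(Q)`, we get `R + D(Q') ≤ I(Q) + D(Q)`.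
-/

open Finset Set

-- For `c = 0` the function vanishes identically, as `u / 0 = 0`.
lemma continuous_mul_log_div (c : ℝ) : Continuous fun u : ℝ => u * Real.log (u / c) := by
  rcases eq_or_ne c 0 with rfl | hc
  · simpa using continuous_const (y := (0 : ℝ))
  · have : (fun u : ℝ => u * Real.log (u / c)) = fun u => u * Real.log u - Real.log c * u := by
      ext u
      rcases eq_or_ne u 0 with rfl | hu
      · simp
      · rw [Real.log_div hu hc]; ring
    rw [this]
    exact Real.continuous_mul_log.sub (continuous_const.mul continuous_id)

lemma convexOn_mul_log_div (c : ℝ) : ConvexOn ℝ (Ici 0) fun u : ℝ => u * Real.log (u / c) := by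
  rcases eq_or_ne c 0 with rfl | hc
  · simpa using convexOn_const (0 : ℝ) (convex_Ici (0 : ℝ))
  · refine (Real.convexOn_mul_log.add
      (((-Real.log c) • LinearMap.id : ℝ →ₗ[ℝ] ℝ).convexOn (convex_Ici 0))).congr fun u _ => ?_
    rcases eq_or_ne u 0 with rfl | hu
    · simp
    · simp [Real.log_div hu hc]; ring

lemma ConvexOn.exists_mem_segment_eq_of_le {E : Type*} [AddCommGroup E] [Module ℝ E]
    [TopologicalSpace E] [ContinuousAdd E] [ContinuousSMul ℝ E] {s : Set E} {f h : E → ℝ}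
    {a b : E} {r : ℝ} (hh : ConvexOn ℝ s h) (hf : ContinuousOn f (segment ℝ a b))
    (ha : a ∈ s) (hb : b ∈ s) (hr : r ∈ Icc (f a) (f b)) (hba : h b ≤ h a) :
    ∃ c ∈ segment ℝ a b, f c = r ∧ h c ≤ h a := by
  obtain ⟨c, hc, hfc⟩ := (convex_segment a b).isPreconnected.intermediate_value
    (left_mem_segment ℝ a b) (right_mem_segment ℝ a b) hf hr
  exact ⟨c, hc, hfc, (hh.le_max_of_mem_segment ha hb hc).trans (max_le le_rfl hba)⟩

lemma csInf_image_add_eq {α : Type*} {S : Set α} {f g : α → ℝ} {r : ℝ} (hS : S.Nonempty)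
    (hfr : ∀ a ∈ S, f a ≤ r) (hbdd : BddBelow ((fun a => f a + g a) '' S))
    (hreach : ∀ a ∈ S, ∃ b ∈ S, r + g b ≤ f a + g a) :
    sInf ((fun a => f a + g a) '' S) = r + sInf (g '' S) := by
  obtain ⟨m, hm⟩ := hbdd
  have hg : BddBelow (g '' S) := ⟨m - r, by
    rintro _ ⟨a, ha, rfl⟩
    linarith [hm ⟨a, ha, rfl⟩, hfr a ha]⟩
  refine le_antisymm ?_ (le_csInf (hS.image _) ?_)
  · rw [← sub_le_iff_le_add']
    refine le_csInf (hS.image _) ?_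
    rintro _ ⟨a, ha, rfl⟩
    linarith [csInf_le ⟨m, hm⟩ ⟨a, ha, rfl⟩, hfr a ha]
  · rintro _ ⟨a, ha, rfl⟩
    obtain ⟨b, hb, hle⟩ := hreach a ha
    linarith [csInf_le hg ⟨b, hb, rfl⟩]

lemma convexOn_dav (d : X → Y → ℝ) : ConvexOn ℝ univ (Dav d) := by
  refine ⟨convex_univ, fun Q _ Q' _ a b _ _ _ => le_of_eq ?_⟩
  simp only [Dav, Pi.add_apply, Pi.smul_apply, smul_eq_mul, mul_sum, ← sum_add_distrib]
  exact sum_congr rfl fun x _ => sum_congr rfl fun y _ => by ring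

/-- The relative entropy `D(Q ‖ P ⊗ QY)`. -/
noncomputable def klDivProd (P : X → ℝ) (QY : Y → ℝ) (Q : X × Y → ℝ) : ℝ :=
  ∑ x, ∑ y, Q (x, y) * Real.log (Q (x, y) / (P x * QY y))

section

variable {P : X → ℝ} {QY : Y → ℝ}

lemma continuous_klDivProd : Continuous (klDivProd P QY) :=
  continuous_finsetSum _ fun _ _ => continuous_finsetSum _ fun _ _ =>
    (continuous_mul_log_div _).comp (continuous_apply _)

lemma convexOn_klDivProd : ConvexOn ℝ (Ici 0) (klDivProd P QY) := by
  refine ⟨convex_Ici 0, fun Q hQ Q' hQ' a b ha hb hab => ?_⟩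
  simp only [klDivProd, smul_eq_mul, Pi.add_apply, Pi.smul_apply, mul_sum, ← sum_add_distrib]
  gcongr with x _ y _
  exact (convexOn_mul_log_div _).2 (hQ (x, y)) (hQ' (x, y)) ha hb hab

lemma IsJoint.mutInfo_eq {Q : X × Y → ℝ} (hQ : IsJoint P QY Q) : mutInfo Q = klDivProd P QY Q := by
  simp only [mutInfo, klDivProd, hQ.2.1, hQ.2.2]

lemma convex_setOf_isJoint : Convex ℝ {Q : X × Y → ℝ | IsJoint P QY Q} := by
  intro Q hQ Q' hQ' a b ha hb hab
  refine ⟨fun p => ?_, fun x => ?_, fun y => ?_⟩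
  · simp only [Pi.add_apply, Pi.smul_apply, smul_eq_mul]
    have := hQ.1 p; have := hQ'.1 p; positivity
  · simp only [margX, Pi.add_apply, Pi.smul_apply, smul_eq_mul, sum_add_distrib, ← mul_sum]
    rw [← margX, ← margX, hQ.2.1, hQ'.2.1, ← add_mul, hab, one_mul]
  · simp only [margY, Pi.add_apply, Pi.smul_apply, smul_eq_mul, sum_add_distrib, ← mul_sum]
    rw [← margY, ← margY, hQ.2.2, hQ'.2.2, ← add_mul, hab, one_mul]

lemma exists_isJoint_mutInfo_eq_of_le (d : X → Y → ℝ) {R : ℝ}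
    {Q Qstar : X × Y → ℝ} (hQ : IsJoint P QY Q) (hQstar : IsJoint P QY Qstar)
    (hmin : mutInfo Qstar + Dav d Qstar ≤ mutInfo Q + Dav d Q)
    (hQR : mutInfo Q ≤ R) (hRQstar : R ≤ mutInfo Qstar) :
    ∃ Q', IsJoint P QY Q' ∧ mutInfo Q' = R ∧ mutInfo Q' + Dav d Q' ≤ mutInfo Q + Dav d Q := by
  have hJ := convex_setOf_isJoint (P := P) (QY := QY)
  have hconv : ConvexOn ℝ {Q | IsJoint P QY Q} fun Q => mutInfo Q + Dav d Q :=
    (((convexOn_klDivProd (P := P) (QY := QY)).subset (fun _ hQ => hQ.1) hJ).add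
      ((convexOn_dav d).subset (subset_univ _) hJ)).congr fun _ hQ => by
        simp only [Pi.add_apply, hQ.mutInfo_eq]
  have hcont : ContinuousOn mutInfo (segment ℝ Q Qstar) :=
    continuous_klDivProd.continuousOn.congr fun _ hQ' =>
      (hJ.segment_subset hQ hQstar hQ').mutInfo_eq
  obtain ⟨Q', hQ', hIQ', hle⟩ :=
    hconv.exists_mem_segment_eq_of_le hcont hQ hQstar ⟨hQR, hRQstar⟩ hmin
  exact ⟨Q', hJ.segment_subset hQ hQstar hQ', hIQ', hle⟩

end

theorem stmt12_general (P : X → ℝ) (QY : Y → ℝ) (d : X → Y → ℝ) (R : ℝ)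
    (Qstar : X × Y → ℝ) (hQstar : IsJoint P QY Qstar)
    (hmin : ∀ Q : X × Y → ℝ, IsJoint P QY Q →
      mutInfo Qstar + Dav d Qstar ≤ mutInfo Q + Dav d Q)
    (hfeas : {Q : X × Y → ℝ | IsJoint P QY Q ∧ mutInfo Q ≤ R}.Nonempty) :
    (mutInfo Qstar ≤ R →
      sInf ((fun Q => mutInfo Q + Dav d Q) ''
          {Q : X × Y → ℝ | IsJoint P QY Q ∧ mutInfo Q ≤ R}) =
        mutInfo Qstar + Dav d Qstar)
    ∧ (R < mutInfo Qstar →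
      sInf ((fun Q => mutInfo Q + Dav d Q) ''
          {Q : X × Y → ℝ | IsJoint P QY Q ∧ mutInfo Q ≤ R}) =
        R + sInf (Dav d '' {Q : X × Y → ℝ | IsJoint P QY Q ∧ mutInfo Q ≤ R})) := by
  set S := {Q : X × Y → ℝ | IsJoint P QY Q ∧ mutInfo Q ≤ R}
  have hlb : mutInfo Qstar + Dav d Qstar ∈ lowerBounds ((fun Q => mutInfo Q + Dav d Q) '' S) := by
    rintro _ ⟨Q, hQ, rfl⟩
    exact hmin Q hQ.1
  refine ⟨fun hR => IsLeast.csInf_eq ⟨⟨Qstar, ⟨hQstar, hR⟩, rfl⟩, hlb⟩,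
    fun hR => csInf_image_add_eq hfeas (fun _ hQ => hQ.2) ⟨_, hlb⟩ ?_⟩
  rintro Q ⟨hQ, hQR⟩
  obtain ⟨Q', hQ', hIQ', hle⟩ :=
    exists_isJoint_mutInfo_eq_of_le d hQ hQstar (hmin Q hQ) hQR hR.le
  exact ⟨Q', ⟨hQ', hIQ'.le⟩, hIQ' ▸ hle⟩

/-- let `Q*` minimize `I(Q)+D(Q)` over joints with marginals `P, Q_Y`,
`R₁ = I(Q*)`, `D₁ = D(Q*)`; let `μ(Q_Y,R) = inf{I(Q)+D(Q) : I(Q) ≤ R}` and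
`D̄(R;Q_Y) = inf{D(Q) : I(Q) ≤ R}` (all over joints with marginals `P, Q_Y`).
Then `μ(Q_Y,R) = R₁ + D₁` for `R ≥ R₁` and `μ(Q_Y,R) = R + D̄(R;Q_Y)` for `R < R₁`. -/
theorem stmt12 (P : X → ℝ) (hP : (∀ x, 0 ≤ P x) ∧ ∑ x, P x = 1)
    (QY : Y → ℝ) (hQY : (∀ y, 0 ≤ QY y) ∧ ∑ y, QY y = 1)
    (d : X → Y → ℝ) (R : ℝ) (hR : 0 ≤ R)
    (Qstar : X × Y → ℝ) (hQstar : IsJoint P QY Qstar)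
    (hmin : ∀ Q : X × Y → ℝ, IsJoint P QY Q →
      mutInfo Qstar + Dav d Qstar ≤ mutInfo Q + Dav d Q)
    (hfeas : {Q : X × Y → ℝ | IsJoint P QY Q ∧ mutInfo Q ≤ R}.Nonempty) :
    (mutInfo Qstar ≤ R →
      sInf ((fun Q => mutInfo Q + Dav d Q) ''
          {Q : X × Y → ℝ | IsJoint P QY Q ∧ mutInfo Q ≤ R}) =
        mutInfo Qstar + Dav d Qstar)
    ∧ (R < mutInfo Qstar →
      sInf ((fun Q => mutInfo Q + Dav d Q) ''
          {Q : X × Y → ℝ | IsJoint P QY Q ∧ mutInfo Q ≤ R}) =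
        R + sInf (Dav d '' {Q : X × Y → ℝ | IsJoint P QY Q ∧ mutInfo Q ≤ R})) :=
  stmt12_general P QY d R Qstar hQstar hmin hfeas
end
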